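/- As λ → 0, the GLG density f_λ(u) converges pointwise to the standard normal density (1/√(2π)) exp(−u²/2) for every u ∈ ℝ. -/

import Mathlib

/-!
Put `t = λ⁻²`, so that `|λ| = t^(-1/2)` and the density equals
`(Γ(t) eᵗ / t^(t - 1/2))⁻¹ · exp (t (1 + λu - e^(λu)))`.
As `λ → 0`, `t → ∞` and the first factor tends to `1/√(2π)` by Stirling's formula for `Γ`,
while the exponent tends to `-u²/2` by the third-order Taylor bound for `exp`.
Stirling's formula for real arguments follows from the factorial one: log-convexity of `Γ`
on `[n, n + 1]` and on `[n + θ, n + θ + 1]` gives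
`log n - (1 - θ) log (n + θ) ≤ log Γ(n + θ) - log Γ(n) ≤ θ log n` for `0 ≤ θ ≤ 1`,
which pins the logarithm of the Stirling ratio at `n + θ` to within `θ/(2n)` of its value at `n`.
-/

open Filter Real Set Topology

noncomputable def stirlingRatio (x : ℝ) : ℝ := Gamma x * exp x / x ^ (x - 1 / 2)

lemma stirlingRatio_pos {x : ℝ} (hx : 0 < x) : 0 < stirlingRatio x := by
  have := Gamma_pos_of_pos hx
  unfold stirlingRatio
  positivity

lemma log_stirlingRatio {x : ℝ} (hx : 0 < x) :
    log (stirlingRatio x) = log (Gamma x) + x - (x - 1 / 2) * log x := by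
  have := Gamma_pos_of_pos hx
  rw [stirlingRatio, log_div (by positivity) (by positivity), log_mul (by positivity)
    (by positivity), log_exp, log_rpow hx]

lemma stirlingRatio_natCast {n : ℕ} (hn : n ≠ 0) :
    stirlingRatio n = √2 * Stirling.stirlingSeq n := by
  have hn0 : (0 : ℝ) < n := by positivity
  have hfac : (n.factorial : ℝ) = n * Gamma n := by
    rw [← Gamma_nat_eq_factorial, Gamma_add_one hn0.ne']
  rw [stirlingRatio, Stirling.stirlingSeq, rpow_sub hn0, rpow_natCast, ← sqrt_eq_rpow, hfac,
    div_pow, ← exp_one_pow, sqrt_mul zero_le_two]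
  have : 0 < √(n : ℝ) := by positivity
  field_simp
  rw [sq_sqrt hn0.le]

lemma tendsto_stirlingRatio_natCast :
    Tendsto (fun n : ℕ => stirlingRatio n) atTop (𝓝 √(2 * π)) := by
  rw [sqrt_mul zero_le_two]
  refine (Stirling.tendsto_stirlingSeq_sqrt_pi.const_mul √2).congr' ?_
  filter_upwards [eventually_ne_atTop 0] with n hn
  exact (stirlingRatio_natCast hn).symm

lemma log_Gamma_add_le {y θ : ℝ} (hy : 0 < y) (hθ₀ : 0 ≤ θ) (hθ₁ : θ ≤ 1) :
    log (Gamma (y + θ)) ≤ log (Gamma y) + θ * log y := by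
  have h := convexOn_log_Gamma.2 (mem_Ioi.2 hy) (mem_Ioi.2 (by linarith : 0 < y + 1))
    (sub_nonneg.2 hθ₁) hθ₀ (by ring)
  simp only [smul_eq_mul, Function.comp_apply] at h
  rw [Gamma_add_one hy.ne', log_mul hy.ne' (Gamma_pos_of_pos hy).ne'] at h
  rw [show y + θ = (1 - θ) * y + θ * (y + 1) by ring]
  linarith

lemma log_Gamma_add_log_le {y θ : ℝ} (hy : 0 < y) (hθ₀ : 0 ≤ θ) (hθ₁ : θ ≤ 1) :
    log (Gamma y) + log y ≤ log (Gamma (y + θ)) + (1 - θ) * log (y + θ) := by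
  have hyθ : 0 < y + θ := by linarith
  have h := convexOn_log_Gamma.2 (mem_Ioi.2 hyθ) (mem_Ioi.2 (by linarith : 0 < y + θ + 1))
    hθ₀ (sub_nonneg.2 hθ₁) (by ring)
  simp only [smul_eq_mul, Function.comp_apply] at h
  rw [Gamma_add_one hyθ.ne', log_mul hyθ.ne' (Gamma_pos_of_pos hyθ).ne'] at h
  have hleft : log (Gamma y) + log y = log (Gamma (θ * (y + θ) + (1 - θ) * (y + θ + 1))) := by
    rw [show θ * (y + θ) + (1 - θ) * (y + θ + 1) = y + 1 by ring, Gamma_add_one hy.ne',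
      log_mul hy.ne' (Gamma_pos_of_pos hy).ne', add_comm]
  linarith

lemma div_add_le_log_add_sub_log {y θ : ℝ} (hy : 0 < y) (hθ : 0 ≤ θ) :
    θ / (y + θ) ≤ log (y + θ) - log y := by
  have h := one_sub_inv_le_log_of_pos (show 0 < (y + θ) / y by positivity)
  rw [log_div (by positivity) hy.ne', inv_div] at h
  convert h using 1
  field_simp
  ring

lemma log_add_sub_log_le_div {y θ : ℝ} (hy : 0 < y) (hθ : 0 ≤ θ) :
    log (y + θ) - log y ≤ θ / y := by
  have h := log_le_sub_one_of_pos (show 0 < (y + θ) / y by positivity)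
  rw [log_div (by positivity) hy.ne'] at h
  convert h using 1
  field_simp
  ring

lemma abs_log_stirlingRatio_add_sub_le {y θ : ℝ} (hy : 1 / 2 ≤ y) (hθ₀ : 0 ≤ θ) (hθ₁ : θ ≤ 1) :
    |log (stirlingRatio (y + θ)) - log (stirlingRatio y)| ≤ θ / (2 * y) := by
  have hy0 : 0 < y := by linarith
  rw [log_stirlingRatio hy0, log_stirlingRatio (by linarith)]
  have hup := log_Gamma_add_le hy0 hθ₀ hθ₁
  have hlo := log_Gamma_add_log_le hy0 hθ₀ hθ₁
  set d := log (y + θ) - log y with hd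
  have hd_le : (y + 1 / 2) * d ≤ θ + θ / (2 * y) := by
    calc (y + 1 / 2) * d ≤ (y + 1 / 2) * (θ / y) :=
          mul_le_mul_of_nonneg_left (log_add_sub_log_le_div hy0 hθ₀) (by linarith)
      _ = θ + θ / (2 * y) := by field_simp
  have hd_ge : θ - θ / (2 * y) ≤ (y + θ - 1 / 2) * d := by
    calc θ - θ / (2 * y) ≤ θ - θ / (2 * (y + θ)) := by gcongr; linarith
      _ = (y + θ - 1 / 2) * (θ / (y + θ)) := by field_simp
      _ ≤ (y + θ - 1 / 2) * d :=
          mul_le_mul_of_nonneg_left (div_add_le_log_add_sub_log hy0 hθ₀) (by linarith)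
  rw [abs_le]
  constructor <;> linarith

lemma tendsto_log_stirlingRatio :
    Tendsto (fun x => log (stirlingRatio x)) atTop (𝓝 (log √(2 * π))) := by
  have hfloor : Tendsto (fun x : ℝ => ⌊x⌋₊) atTop atTop := tendsto_nat_floor_atTop
  have hnat := (tendsto_stirlingRatio_natCast.log (by positivity)).comp hfloor
  have herr : Tendsto (fun x : ℝ => 1 / (2 * (⌊x⌋₊ : ℝ))) atTop (𝓝 0) := by
    refine ((tendsto_const_div_atTop_nhds_zero_nat (1 / 2 : ℝ)).comp hfloor).congr fun x => ?_
    simp only [Function.comp_apply]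
    ring
  have hdiff : Tendsto (fun x => log (stirlingRatio x) - log (stirlingRatio ⌊x⌋₊)) atTop (𝓝 0) := by
    refine squeeze_zero_norm' ?_ herr
    filter_upwards [eventually_ge_atTop 1] with x hx
    have hn : (1 : ℝ) ≤ ⌊x⌋₊ := by exact_mod_cast Nat.le_floor (by exact_mod_cast hx)
    have hθ₀ : 0 ≤ x - ⌊x⌋₊ := sub_nonneg.2 (Nat.floor_le (by linarith))
    have hθ₁ : x - ⌊x⌋₊ ≤ 1 := by linarith [Nat.lt_floor_add_one x]
    calc ‖log (stirlingRatio x) - log (stirlingRatio ⌊x⌋₊)‖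
        = |log (stirlingRatio (⌊x⌋₊ + (x - ⌊x⌋₊))) - log (stirlingRatio ⌊x⌋₊)| := by
          rw [add_sub_cancel, Real.norm_eq_abs]
      _ ≤ (x - ⌊x⌋₊) / (2 * ⌊x⌋₊) := abs_log_stirlingRatio_add_sub_le (by linarith) hθ₀ hθ₁
      _ ≤ 1 / (2 * ⌊x⌋₊) := by gcongr
  simpa using hnat.add hdiff

lemma tendsto_stirlingRatio : Tendsto stirlingRatio atTop (𝓝 √(2 * π)) := by
  rw [← exp_log (show 0 < √(2 * π) by positivity)]
  refine tendsto_log_stirlingRatio.rexp.congr' ?_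
  filter_upwards [eventually_gt_atTop 0] with x hx
  exact exp_log (stirlingRatio_pos hx)

lemma tendsto_zpow_neg_two_nhdsNE_zero :
    Tendsto (fun lam : ℝ => lam ^ (-2 : ℤ)) (𝓝[≠] 0) atTop :=
  (tendsto_norm_cobounded_atTop.comp (tendsto_zpow_nhdsNE_zero_cobounded (by norm_num))).congr
    fun lam => norm_of_nonneg (Even.zpow_nonneg (by decide) lam)

lemma abs_eq_zpow_neg_two_rpow (lam : ℝ) : |lam| = (lam ^ (-2 : ℤ)) ^ (-1 / 2 : ℝ) := by
  rw [← Even.zpow_abs (by decide), ← rpow_intCast, ← rpow_mul (abs_nonneg lam)]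
  norm_num

lemma abs_exp_sub_quadratic_le {x : ℝ} (hx : |x| ≤ 1) :
    |exp x - (1 + x + x ^ 2 / 2)| ≤ |x| ^ 3 := by
  have h := Real.exp_bound hx (n := 3) (by norm_num)
  norm_num [Finset.sum_range_succ, Nat.factorial] at h
  nlinarith [pow_nonneg (abs_nonneg x) 3]

lemma tendsto_glg_exponent (u : ℝ) :
    Tendsto (fun lam : ℝ => lam ^ (-2 : ℤ) * (lam * u - exp (lam * u)) + lam ^ (-2 : ℤ))
      (𝓝[≠] 0) (𝓝 (-u ^ 2 / 2)) := by
  rw [tendsto_iff_norm_sub_tendsto_zero]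
  have hsmall : ∀ᶠ lam in 𝓝[≠] (0 : ℝ), |lam * u| ≤ 1 := by
    have : Tendsto (fun lam : ℝ => |lam * u|) (𝓝 0) (𝓝 0) := by
      simpa using ((continuous_mul_const u).abs.tendsto 0)
    exact ((this.eventually_lt_const one_pos).mono fun _ h => h.le).filter_mono nhdsWithin_le_nhds
  have hbound : Tendsto (fun lam : ℝ => |u| ^ 3 * |lam|) (𝓝[≠] 0) (𝓝 0) := by
    have : Continuous fun lam : ℝ => |u| ^ 3 * |lam| := by fun_prop
    simpa using (this.tendsto 0).mono_left nhdsWithin_le_nhds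
  refine squeeze_zero_norm' ?_ hbound
  filter_upwards [hsmall, self_mem_nhdsWithin] with lam hle (hlam : lam ≠ 0)
  have key : lam ^ (-2 : ℤ) * (lam * u - exp (lam * u)) + lam ^ (-2 : ℤ) - -u ^ 2 / 2
      = -(exp (lam * u) - (1 + lam * u + (lam * u) ^ 2 / 2)) / lam ^ 2 := by
    rw [zpow_neg, zpow_ofNat]
    field_simp
    ring
  rw [norm_norm, key, norm_div, norm_neg, norm_pow, Real.norm_eq_abs, Real.norm_eq_abs, sq_abs]
  calc |exp (lam * u) - (1 + lam * u + (lam * u) ^ 2 / 2)| / lam ^ 2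
      ≤ |lam * u| ^ 3 / lam ^ 2 := by gcongr; exact abs_exp_sub_quadratic_le hle
    _ = |u| ^ 3 * |lam| := by
      rw [abs_mul, mul_pow, pow_succ |lam|, sq_abs]
      field_simp

lemma inv_stirlingRatio_mul_exp {t : ℝ} (ht : 0 < t) (a : ℝ) :
    (stirlingRatio t)⁻¹ * exp (a + t) = t ^ (-1 / 2 : ℝ) / Gamma t * t ^ t * exp a := by
  have hpow : t ^ (-1 / 2 : ℝ) * t ^ t = t ^ (t - 1 / 2) := by
    rw [← rpow_add ht]
    ring_nf
  have := Gamma_pos_of_pos ht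
  rw [stirlingRatio, exp_add, ← hpow]
  field_simp

/-- As λ → 0 (λ ≠ 0), the GLG density f_λ(u) converges pointwise to the
standard normal density (1/√(2π)) exp(−u²/2), for every u ∈ ℝ. -/
theorem glg_density_tendsto_normal (u : ℝ) :
    Tendsto (fun lam : ℝ =>
        |lam| / Real.Gamma (lam ^ (-2 : ℤ)) * (lam ^ (-2 : ℤ)) ^ ((lam ^ (-2 : ℤ) : ℝ)) *
          Real.exp (lam ^ (-2 : ℤ) * (lam * u - Real.exp (lam * u))))
      (nhdsWithin 0 {0}ᶜ)
      (nhds (1 / Real.sqrt (2 * Real.pi) * Real.exp (-u ^ 2 / 2))) := by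
  have hratio := (tendsto_stirlingRatio.comp tendsto_zpow_neg_two_nhdsNE_zero).inv₀
    (by positivity)
  have hexp := (tendsto_glg_exponent u).rexp
  rw [one_div]
  refine (hratio.mul hexp).congr' ?_
  filter_upwards [self_mem_nhdsWithin] with lam (hlam : lam ≠ 0)
  rw [abs_eq_zpow_neg_two_rpow]
  exact inv_stirlingRatio_mul_exp (Even.zpow_pos (by decide) hlam) _
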